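/- arXiv:2112.01614 — 4 statements merged into one kernel-verified Lean document; each statement's English description precedes it below -/
import Mathlib

section
/- Let m ≥ 1, let A_m ∈ ℝ^{m×m} be the upper shift matrix, c_m ∈ ℝ^m the first standard basis vector, and for ω ∈ ℝ let l(ω) ∈ ℝ^m have entries l_i(ω) = binom(m,i)·ω^i for i = 1,…,m. Then the characteristic polynomial of the extended state observer error matrix M(ω) = A_m − l(ω)·c_m^⊤ equals (X + ω)^m. -/
open Matrix Polynomial

/-- The `m × m` upper shift matrix: ones on the superdiagonal, zeros elsewhere. -/
noncomputable def shiftMat (m : ℕ) : Matrix (Fin m) (Fin m) ℝ :=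
  Matrix.of fun i j => if (i : ℕ) + 1 = (j : ℕ) then 1 else 0

/-- The first standard basis vector of `ℝ^m`. -/
noncomputable def firstBasis (m : ℕ) : Fin m → ℝ :=
  fun i => if (i : ℕ) = 0 then 1 else 0

/-- Bandwidth-parametrized observer gain: `l_i(ω) = binom(m,i)·ω^i` for `i = 1,…,m`
(0-indexed: `l i = binom(m, i+1)·ω^(i+1)`). -/
noncomputable def obsGain (m : ℕ) (ω : ℝ) : Fin m → ℝ :=
  fun i => (m.choose ((i : ℕ) + 1)) * ω ^ ((i : ℕ) + 1)

/-- The ESO error matrix `M(ω) = A_m − l(ω)·c_m^⊤`. -/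
noncomputable def esoMat (m : ℕ) (ω : ℝ) : Matrix (Fin m) (Fin m) ℝ :=
  shiftMat m - Matrix.vecMulVec (obsGain m ω) (firstBasis m)

/-!
`x • 1 - M(ω)` is the characteristic matrix of a companion-type matrix: minus the shift plus
`x` on the diagonal, with the gain added to the first column. Expanding along the last row gives
the Horner recursion `det_{n+1} = x · det_n + a_n`, so its determinant is
`xⁿ + ∑ a_i x^(n-1-i)`; with `a_i = binom(m, i+1) ω^(i+1)` this is the binomial expansion of
`(x + ω)^m`.
-/

namespace Matrix

variable {R : Type*} [CommRing R]

/-- `x • 1 - (S - a e₀ᵀ)`, where `S` is the upper shift. -/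
def companionCharmatrix {n : ℕ} (x : R) (a : Fin n → R) : Matrix (Fin n) (Fin n) R :=
  of fun i j => (if (j : ℕ) = 0 then a i else 0) + (if i = j then x else 0)
    - (if (i : ℕ) + 1 = j then 1 else 0)

variable {n : ℕ} (x : R)

theorem companionCharmatrix_apply (a : Fin n → R) (i j : Fin n) :
    companionCharmatrix x a i j = (if (j : ℕ) = 0 then a i else 0) + (if i = j then x else 0)
      - (if (i : ℕ) + 1 = j then 1 else 0) := rfl

theorem companionCharmatrix_last_apply (a : Fin (n + 1) → R) (j : Fin (n + 1)) :
    companionCharmatrix x a (Fin.last n) j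
      = (if j = 0 then a (Fin.last n) else 0) + (if j = Fin.last n then x else 0) := by
  have : n + 1 ≠ (j : ℕ) := j.isLt.ne'
  simp only [companionCharmatrix_apply, Fin.val_last, this, if_false, sub_zero, Fin.ext_iff,
    Fin.val_zero, eq_comm (a := n)]

theorem companionCharmatrix_submatrix_castSucc_castSucc (a : Fin (n + 1) → R) :
    (companionCharmatrix x a).submatrix Fin.castSucc Fin.castSucc
      = companionCharmatrix x (a ∘ Fin.castSucc) := by
  ext i j
  simp [companionCharmatrix_apply]

theorem det_companionCharmatrix_submatrix_castSucc_succ (a : Fin (n + 1) → R) :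
    ((companionCharmatrix x a).submatrix Fin.castSucc Fin.succ).det = (-1) ^ n := by
  rw [det_of_isLowerTriangular]
  · simp [companionCharmatrix_apply, Fin.ext_iff]
  · intro i j (hij : (i : ℕ) < j)
    grind [companionCharmatrix_apply, submatrix_apply]

theorem det_companionCharmatrix_succ (a : Fin (n + 1) → R) :
    (companionCharmatrix x a).det
      = x * (companionCharmatrix x (a ∘ Fin.castSucc)).det + a (Fin.last n) := by
  -- The minor at `(last, 0)` is lower triangular with diagonal `-1`.
  rw [det_succ_row _ (Fin.last n)]
  simp only [companionCharmatrix_last_apply, mul_add, add_mul, Finset.sum_add_distrib, mul_ite,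
    ite_mul, mul_zero, zero_mul, Finset.sum_ite_eq', Finset.mem_univ, if_true, Fin.succAbove_last,
    Fin.succAbove_zero, companionCharmatrix_submatrix_castSucc_castSucc,
    det_companionCharmatrix_submatrix_castSucc_succ]
  have hsq : (-1 : R) ^ n * (-1) ^ n = 1 := by rw [← mul_pow]; simp
  simp only [Fin.val_last, Fin.val_zero, add_zero, pow_add]
  linear_combination (a (Fin.last n) + x * (companionCharmatrix x (a ∘ Fin.castSucc)).det) * hsq

theorem det_companionCharmatrix (a : Fin n → R) :
    (companionCharmatrix x a).det = x ^ n + ∑ i, a i * x ^ (i.rev : ℕ) := by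
  induction n with
  | zero => simp
  | succ n ih =>
    rw [det_companionCharmatrix_succ, ih, Fin.sum_univ_castSucc]
    simp only [Function.comp_apply, Fin.rev_castSucc, Fin.val_succ, Fin.rev_last, Fin.val_zero,
      pow_zero, pow_succ', mul_add, Finset.mul_sum, mul_left_comm x]
    ring

end Matrix

theorem add_pow_eq_pow_add_sum_fin {R : Type*} [CommSemiring R] (x y : R) (n : ℕ) :
    (x + y) ^ n = x ^ n + ∑ i : Fin n, (n.choose (i + 1) * y ^ ((i : ℕ) + 1)) * x ^ (i.rev : ℕ) := by
  rw [add_comm, add_pow, Finset.sum_range_succ', ← Fin.sum_univ_eq_sum_range, add_comm]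
  simp only [Fin.val_rev, pow_zero, one_mul, Nat.sub_zero, Nat.choose_zero_right, Nat.cast_one,
    mul_one]
  exact congrArg _ (Finset.sum_congr rfl fun i _ => by ring)

theorem charmatrix_esoMat (m : ℕ) (ω : ℝ) :
    charmatrix (esoMat m ω) = companionCharmatrix X (fun i => C (obsGain m ω i)) := by
  ext i j : 1
  simp only [charmatrix_apply, esoMat, shiftMat, firstBasis, obsGain, vecMulVec_apply,
    companionCharmatrix_apply, Matrix.sub_apply, of_apply, diagonal_apply, mul_ite, mul_one,
    mul_zero, map_sub, apply_ite C, map_one, map_zero]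
  ring

theorem eso_charpoly_general (m : ℕ) (ω : ℝ) :
    (esoMat m ω).charpoly = (X + C ω) ^ m := by
  rw [charpoly, charmatrix_esoMat, det_companionCharmatrix, add_pow_eq_pow_add_sum_fin]
  simp only [obsGain, C_mul, C_pow, map_natCast]

/-- The characteristic polynomial of the bandwidth-parametrized ESO error matrix
`M(ω) = A_m − l(ω)·c_m^⊤` equals `(X + ω)^m`. -/
theorem eso_charpoly (m : ℕ) (hm : 1 ≤ m) (ω : ℝ) :
    (esoMat m ω).charpoly = (X + C ω) ^ m :=
  eso_charpoly_general m ω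
end

section
/- Let m ≥ 1, A_m the m×m upper shift matrix, c_m the first standard basis vector, l_i(ω) = binom(m,i)·ω^i, and M(ω) = A_m − l(ω)·c_m^⊤. Then (M(ω) + ω·I_m)^m = 0, i.e. M(ω) + ωI is nilpotent of index at most m. -/
open Matrix

/-!
Read a vector `v ∈ ℝ^m` as the polynomial `∑ vᵢ X^(m-1-i)` of degree `< m`. In this picture
`l(ω)` is the coefficient vector of `(X + ω)^m` with the leading `1` dropped, and `M(ω) + ω`
acts as multiplication by `X + ω` followed by reduction modulo `(X + ω)^m`. Hence the
coefficient vectors of `(X + ω)^b`, `b < m`, form a Jordan chain for `M(ω) + ω` ending in `0`,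
and since they form a unitriangular basis, `(M(ω) + ω)^m = 0`.
-/

open Polynomial

def revCoeffVec {R : Type*} [Semiring R] (m : ℕ) (q : R[X]) : Fin m → R :=
  fun i => q.coeff i.rev

lemma shiftMat_mulVec_apply {m : ℕ} (v : Fin m → ℝ) (i : Fin m) :
    (shiftMat m *ᵥ v) i = if h : (i : ℕ) + 1 < m then v ⟨i + 1, h⟩ else 0 := by
  simp only [mulVec, dotProduct, shiftMat, of_apply, ite_mul, one_mul, zero_mul]
  split_ifs with h
  · rw [Finset.sum_eq_single_of_mem ⟨i + 1, h⟩ (Finset.mem_univ _)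
      fun k _ hk => if_neg fun hik => hk (Fin.ext hik.symm), if_pos rfl]
  · exact Finset.sum_eq_zero fun k _ => if_neg (by omega)

lemma shiftMat_mulVec_revCoeffVec {m : ℕ} (q : ℝ[X]) :
    shiftMat m *ᵥ revCoeffVec m q = revCoeffVec m (X * q) := by
  ext i
  rw [shiftMat_mulVec_apply]
  simp only [revCoeffVec]
  split_ifs with h
  · rw [show (i.rev : ℕ) = (Fin.rev ⟨i + 1, h⟩ : ℕ) + 1 by simp [Fin.val_rev]; omega,
      coeff_X_mul]
  · rw [show (i.rev : ℕ) = 0 by simp [Fin.val_rev]; omega, coeff_X_mul_zero]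

lemma firstBasis_dotProduct_revCoeffVec {m : ℕ} (hm : 1 ≤ m) (q : ℝ[X]) :
    firstBasis m ⬝ᵥ revCoeffVec m q = q.coeff (m - 1) := by
  simp only [dotProduct, firstBasis, ite_mul, one_mul, zero_mul]
  rw [Finset.sum_eq_single_of_mem ⟨0, hm⟩ (Finset.mem_univ _)
      fun k _ hk => if_neg fun hk0 => hk (Fin.ext hk0), if_pos rfl, revCoeffVec, Fin.val_rev]

lemma obsGain_eq_revCoeffVec (m : ℕ) (ω : ℝ) :
    obsGain m ω = revCoeffVec m ((X + C ω) ^ m) := by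
  ext i
  have hrev : (i.rev : ℕ) = m - (i + 1) := Fin.val_rev i
  rw [obsGain, revCoeffVec, coeff_X_add_C_pow, hrev, Nat.choose_symm (by omega),
    show m - (m - (i + 1)) = i + 1 by omega, mul_comm]

lemma esoMat_add_smul_mulVec_revCoeffVec {m : ℕ} (hm : 1 ≤ m) (ω : ℝ) (q : ℝ[X]) :
    (esoMat m ω + ω • 1) *ᵥ revCoeffVec m q =
      revCoeffVec m ((X + C ω) * q) - q.coeff (m - 1) • revCoeffVec m ((X + C ω) ^ m) := by
  rw [esoMat, add_mulVec, sub_mulVec, vecMulVec_mulVec, shiftMat_mulVec_revCoeffVec,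
    firstBasis_dotProduct_revCoeffVec hm, obsGain_eq_revCoeffVec, smul_mulVec, one_mulVec,
    op_smul_eq_smul]
  ext i
  simp only [revCoeffVec, Pi.add_apply, Pi.sub_apply, Pi.smul_apply, smul_eq_mul, add_mul,
    coeff_add, coeff_C_mul]
  ring

lemma esoMat_add_smul_mulVec_revCoeffVec_pow {m : ℕ} (hm : 1 ≤ m) (ω : ℝ) {b : ℕ}
    (hb : b + 1 < m) :
    (esoMat m ω + ω • 1) *ᵥ revCoeffVec m ((X + C ω) ^ b) =
      revCoeffVec m ((X + C ω) ^ (b + 1)) := by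
  rw [esoMat_add_smul_mulVec_revCoeffVec hm, coeff_X_add_C_pow,
    Nat.choose_eq_zero_of_lt (by omega), Nat.cast_zero, mul_zero, zero_smul, sub_zero, pow_succ']

lemma esoMat_add_smul_mulVec_revCoeffVec_pow_pred {m : ℕ} (hm : 1 ≤ m) (ω : ℝ) :
    (esoMat m ω + ω • 1) *ᵥ revCoeffVec m ((X + C ω) ^ (m - 1)) = 0 := by
  rw [esoMat_add_smul_mulVec_revCoeffVec hm, coeff_X_add_C_pow, Nat.choose_self, Nat.sub_self,
    pow_zero, Nat.cast_one, mul_one, one_smul, ← pow_succ', Nat.sub_add_cancel hm, sub_self]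

lemma pow_mulVec_eq_zero_of_chain {ι R : Type*} [Fintype ι] [DecidableEq ι] [Semiring R]
    (N : Matrix ι ι R) {m : ℕ} (u : ℕ → ι → R)
    (hsucc : ∀ b, b + 1 < m → N *ᵥ u b = u (b + 1))
    (hlast : N *ᵥ u (m - 1) = 0) {b : ℕ} (hb : b < m) : N ^ m *ᵥ u b = 0 := by
  have tail : ∀ k c, c + k + 1 = m → N ^ (k + 1) *ᵥ u c = 0 := by
    intro k
    induction k with
    | zero => intro c hc; rw [zero_add, pow_one, show c = m - 1 by omega, hlast]
    | succ k ih =>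
      intro c hc
      rw [pow_succ, ← mulVec_mulVec, hsucc c (by omega), ih (c + 1) (by omega)]
  rw [show m = b + (m - b - 1 + 1) by omega, pow_add, ← mulVec_mulVec, tail _ b (by omega),
    mulVec_zero]

noncomputable def binomialMat {R : Type*} [CommRing R] (m : ℕ) (r : R) :
    Matrix (Fin m) (Fin m) R :=
  of fun i j => revCoeffVec m ((X + C r) ^ (j.rev : ℕ)) i

lemma det_binomialMat {R : Type*} [CommRing R] (m : ℕ) (r : R) : (binomialMat m r).det = 1 := by
  rw [det_of_isLowerTriangular]
  · exact Finset.prod_eq_one fun i _ => by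
      rw [binomialMat, of_apply, revCoeffVec, coeff_X_add_C_pow, Nat.choose_self, Nat.sub_self,
        pow_zero, Nat.cast_one, mul_one]
  · intro i j hij
    have hrev : (j.rev : ℕ) < i.rev := Fin.rev_lt_rev.mpr hij
    rw [binomialMat, of_apply, revCoeffVec, coeff_X_add_C_pow, Nat.choose_eq_zero_of_lt hrev,
      Nat.cast_zero, mul_zero]

/-- `(M(ω) + ω·I_m)^m = 0`: the shifted ESO error matrix is nilpotent of index at most `m`. -/
theorem eso_nilpotent (m : ℕ) (hm : 1 ≤ m) (ω : ℝ) :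
    (esoMat m ω + ω • (1 : Matrix (Fin m) (Fin m) ℝ)) ^ m = 0 := by
  have hchain : ∀ b < m,
      (esoMat m ω + ω • 1) ^ m *ᵥ revCoeffVec m ((X + C ω) ^ b) = 0 := fun b =>
    pow_mulVec_eq_zero_of_chain _ (fun b => revCoeffVec m ((X + C ω) ^ b))
      (fun _ => esoMat_add_smul_mulVec_revCoeffVec_pow hm ω)
      (esoMat_add_smul_mulVec_revCoeffVec_pow_pred hm ω)
  have hunit : IsUnit (binomialMat m ω) := by
    rw [isUnit_iff_isUnit_det, det_binomialMat]
    exact isUnit_one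
  rw [← hunit.mul_left_eq_zero]
  ext i j
  exact congrFun (hchain j.rev j.rev.isLt) i
end

section
/- Let m ≥ 1, A_m the m×m upper shift matrix, c_m the first standard basis vector, l_i(ω) = binom(m,i)·ω^i, and M(ω) = A_m − l(ω)·c_m^⊤. There exists a constant C > 0, depending only on m, such that for all ω ≥ 1 and all t ≥ 0, the operator norm of the matrix exponential satisfies ‖exp(t·M(ω))‖ ≤ C · ω^{m−1} · e^{−ωt/2}. -/
open Matrix

/-! Let `N = M(1) + 1` and `P` the matrix with entries `C(m-1-k, m-1-i)`. Pascal's rule gives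
`N P = P A_m` and `P` is unitriangular, so `N^m = P A_m^m P⁻¹ = 0`. Hence
`exp(s M(1)) = e^{-s} ∑_{n<m} (sⁿ/n!) Nⁿ`, and `sⁿ/n! ≤ 2ⁿ e^{s/2}` yields
`‖exp(s M(1))‖ ≤ C e^{-s/2}`. Finally `M(ω) Λ = ω Λ M(1)` for `Λ = diag(1, ω, …, ω^{m-1})`, so
`exp(t M(ω)) = Λ exp(ωt M(1)) Λ⁻¹` with `‖Λ‖ ≤ ω^{m-1}` and `‖Λ⁻¹‖ ≤ 1`. -/

open Finset Matrix NormedSpace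
open scoped Nat

theorem pow_div_factorial_le_two_pow_mul_exp_half {s : ℝ} (hs : 0 ≤ s) (n : ℕ) :
    s ^ n / n ! ≤ 2 ^ n * Real.exp (s / 2) := by
  have h := Real.pow_div_factorial_le_exp (s / 2) (by positivity) n
  calc s ^ n / n ! = 2 ^ n * ((s / 2) ^ n / n !) := by rw [div_pow]; field_simp
    _ ≤ 2 ^ n * Real.exp (s / 2) := by gcongr

section NilpotentExp

variable {𝔸 : Type*} [NormedRing 𝔸] [NormedAlgebra ℝ 𝔸]

theorem exp_smul_eq_sum_range_of_pow_eq_zero {K : 𝔸} {m : ℕ} (hK : K ^ m = 0) (s : ℝ) :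
    exp (s • K) = ∑ n ∈ range m, (s ^ n / n !) • K ^ n := by
  rw [exp_eq_tsum ℝ]
  refine (tsum_eq_sum fun n hn => ?_).trans (sum_congr rfl fun n _ => ?_)
  · rw [smul_pow, pow_eq_zero_of_le (by simpa using hn) hK, smul_zero, smul_zero]
  · rw [smul_pow, smul_smul, inv_mul_eq_div]

theorem norm_exp_smul_le_of_pow_eq_zero {K : 𝔸} {m : ℕ} (hK : K ^ m = 0) {s : ℝ} (hs : 0 ≤ s) :
    ‖exp (s • K)‖ ≤ (∑ n ∈ range m, 2 ^ n * ‖K ^ n‖) * Real.exp (s / 2) := by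
  rw [exp_smul_eq_sum_range_of_pow_eq_zero hK, sum_mul]
  refine (norm_sum_le _ _).trans (sum_le_sum fun n _ => ?_)
  rw [norm_smul, Real.norm_of_nonneg (by positivity), mul_right_comm]
  gcongr
  exact pow_div_factorial_le_two_pow_mul_exp_half hs n

variable [CompleteSpace 𝔸]

theorem exp_smul_sub_one (K : 𝔸) (s : ℝ) : exp (s • (K - 1)) = Real.exp (-s) • exp (s • K) := by
  have hradius {x : 𝔸} : x ∈ Metric.eball 0 (expSeries ℝ 𝔸).radius :=
    (expSeries_radius_eq_top ℝ 𝔸).symm ▸ edist_lt_top _ _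
  have hsplit : s • (K - 1) = s • K + algebraMap ℝ 𝔸 (-s) := by
    rw [Algebra.algebraMap_eq_smul_one]; module
  rw [hsplit, exp_add_of_commute_of_mem_ball (Algebra.commutes _ _).symm hradius hradius,
    ← algebraMap_exp_comm, ← Real.exp_eq_exp_ℝ, ← Algebra.commutes,
    ← Algebra.smul_def]

theorem norm_exp_smul_le_of_add_one_pow_eq_zero {M : 𝔸} {m : ℕ} (hM : (M + 1) ^ m = 0) {s : ℝ}
    (hs : 0 ≤ s) :
    ‖exp (s • M)‖ ≤ (∑ n ∈ range m, 2 ^ n * ‖(M + 1) ^ n‖) * Real.exp (-s / 2) := by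
  calc ‖exp (s • M)‖ = Real.exp (-s) * ‖exp (s • (M + 1))‖ := by
        conv_lhs => rw [← add_sub_cancel_right M 1, exp_smul_sub_one]
        rw [norm_smul, Real.norm_of_nonneg (Real.exp_pos _).le]
    _ ≤ Real.exp (-s) * ((∑ n ∈ range m, 2 ^ n * ‖(M + 1) ^ n‖) * Real.exp (s / 2)) := by
        gcongr
        exact norm_exp_smul_le_of_pow_eq_zero hM hs
    _ = (∑ n ∈ range m, 2 ^ n * ‖(M + 1) ^ n‖) * Real.exp (-s / 2) := by
        rw [mul_left_comm, ← Real.exp_add]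
        ring_nf

end NilpotentExp

section ShiftMatrix

variable {m : ℕ}

theorem shiftMat_mul_apply (B : Matrix (Fin m) (Fin m) ℝ) (i k : Fin m) :
    (shiftMat m * B) i k = if h : (i : ℕ) + 1 < m then B ⟨i + 1, h⟩ k else 0 := by
  rw [mul_apply]
  split_ifs with h
  · rw [Fintype.sum_eq_single ⟨i + 1, h⟩ fun j hj => by
      rw [shiftMat, of_apply, if_neg fun hij => hj (Fin.ext hij.symm), zero_mul]]
    rw [shiftMat, of_apply, if_pos rfl, one_mul]
  · exact Fintype.sum_eq_zero _ fun j => by rw [shiftMat, of_apply, if_neg (by omega), zero_mul]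

theorem mul_shiftMat_apply (B : Matrix (Fin m) (Fin m) ℝ) (i k : Fin m) :
    (B * shiftMat m) i k =
      if (k : ℕ) ≠ 0 then B i ⟨k - 1, (Nat.sub_le _ _).trans_lt k.isLt⟩ else 0 := by
  rw [mul_apply]
  split_ifs with h
  · rw [Fintype.sum_eq_single ⟨k - 1, (Nat.sub_le _ _).trans_lt k.isLt⟩ fun j hj => by
      rw [shiftMat, of_apply, if_neg fun hjk => hj (Fin.ext (Nat.eq_sub_of_add_eq hjk)), mul_zero]]
    rw [shiftMat, of_apply, if_pos (Nat.sub_add_cancel (Nat.one_le_iff_ne_zero.mpr h)), mul_one]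
  · exact Fintype.sum_eq_zero _ fun j => by rw [shiftMat, of_apply, if_neg (by omega), mul_zero]

theorem shiftMat_pow_apply (p : ℕ) (i j : Fin m) :
    (shiftMat m ^ p) i j = if (i : ℕ) + p = j then 1 else 0 := by
  induction p generalizing i with
  | zero => simp [one_apply, Fin.ext_iff]
  | succ p ih =>
    rw [pow_succ', shiftMat_mul_apply]
    simp only [ih]
    split_ifs <;> first | rfl | omega

theorem shiftMat_pow_self : shiftMat m ^ m = 0 := by
  ext i j
  rw [shiftMat_pow_apply, if_neg (by omega), Matrix.zero_apply]

end ShiftMatrix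

theorem Nat.choose_succ_left_eq_ite (b a : ℕ) :
    (b + 1).choose a = (if 0 < a then b.choose (a - 1) else 0) + b.choose a := by
  rcases a with _ | a
  · simp
  · simp [Nat.choose_succ_succ']

section PascalMatrix

variable {m : ℕ}

/-- Its columns `k ↦ C(m-1-k, m-1-i)` form a Jordan chain of `esoMat m 1 + 1`. -/
noncomputable def pascalMat (m : ℕ) : Matrix (Fin m) (Fin m) ℝ :=
  of fun i k => ((k.rev : ℕ).choose i.rev : ℝ)

theorem det_pascalMat : (pascalMat m).det = 1 := by
  rw [det_of_isLowerTriangular _ fun i j (hij : i < j) => ?_]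
  · exact prod_eq_one fun i _ => by simp [pascalMat]
  · simp only [pascalMat, of_apply, Nat.cast_eq_zero]
    exact Nat.choose_eq_zero_of_lt (Fin.rev_lt_rev.mpr hij)

theorem firstBasis_vecMul_pascalMat : firstBasis m ᵥ* pascalMat m = firstBasis m := by
  ext k
  have hm : 0 < m := k.pos
  rw [vecMul, dotProduct, Fintype.sum_eq_single ⟨0, hm⟩ fun i hi => by
    simp only [firstBasis, if_neg fun h => hi (Fin.ext h), zero_mul]]
  simp only [firstBasis, pascalMat, of_apply, Fin.val_rev, if_true, one_mul]
  split_ifs with hk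
  · simp [hk]
  · rw [Nat.choose_eq_zero_of_lt (by omega), Nat.cast_zero]

theorem esoMat_one_add_one_mul_pascalMat :
    (esoMat m 1 + 1) * pascalMat m = pascalMat m * shiftMat m := by
  rw [esoMat, add_mul, sub_mul, vecMulVec_mul, firstBasis_vecMul_pascalMat, one_mul]
  ext i k
  rw [Matrix.add_apply, Matrix.sub_apply, shiftMat_mul_apply, mul_shiftMat_apply]
  simp only [pascalMat, of_apply, vecMulVec_apply, obsGain, firstBasis, Fin.val_rev, one_pow,
    mul_one]
  obtain ⟨i, hi⟩ := i
  obtain ⟨k, hk⟩ := k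
  simp only [dite_eq_ite, show m - (i + 1 + 1) = m - (i + 1) - 1 by omega,
    show i + 1 < m ↔ 0 < m - (i + 1) by omega]
  rcases k with _ | k
  · obtain ⟨n, rfl⟩ : ∃ n, m = n + 1 := ⟨m - 1, by omega⟩
    rw [← Nat.choose_symm (show i + 1 ≤ n + 1 by omega), Nat.add_sub_cancel,
      Nat.choose_succ_left_eq_ite]
    simp
  · rw [show m - (k + 1 - 1 + 1) = m - (k + 1 + 1) + 1 by omega, Nat.choose_succ_left_eq_ite]
    simp

end PascalMatrix

theorem esoMat_one_add_one_pow_self {m : ℕ} : (esoMat m 1 + 1) ^ m = 0 := by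
  have hP : IsUnit (pascalMat m) := (isUnit_iff_isUnit_det _).mpr (det_pascalMat ▸ isUnit_one)
  have h : SemiconjBy (pascalMat m) (shiftMat m) (esoMat m 1 + 1) :=
    esoMat_one_add_one_mul_pascalMat.symm
  replace h := h.pow_right m
  rw [SemiconjBy, shiftMat_pow_self, mul_zero] at h
  exact hP.mul_left_eq_zero.mp h.symm

section BandwidthScaling

variable {m : ℕ}

noncomputable def bandScaling (m : ℕ) (ω : ℝ) : Matrix (Fin m) (Fin m) ℝ :=
  diagonal fun i => ω ^ (i : ℕ)

theorem bandScaling_mul_bandScaling_inv {ω : ℝ} (hω : ω ≠ 0) :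
    bandScaling m ω * bandScaling m ω⁻¹ = 1 := by
  rw [bandScaling, bandScaling, diagonal_mul_diagonal, ← diagonal_one]
  congr 1 with i
  rw [inv_pow, mul_inv_cancel₀ (pow_ne_zero _ hω)]

theorem esoMat_mul_bandScaling (ω : ℝ) :
    esoMat m ω * bandScaling m ω = ω • (bandScaling m ω * esoMat m 1) := by
  ext i j
  simp only [bandScaling, mul_diagonal, diagonal_mul, Matrix.smul_apply, esoMat, shiftMat,
    vecMulVec, obsGain, firstBasis, Matrix.sub_apply, of_apply, smul_eq_mul, one_pow, mul_one]
  split_ifs with h1 h2 h3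
  · omega
  · rw [← h1, pow_succ]; ring
  · rw [h3, pow_zero, pow_succ]; ring
  · ring

theorem exp_smul_esoMat {ω : ℝ} (hω : ω ≠ 0) (t : ℝ) :
    exp (t • esoMat m ω) = bandScaling m ω * exp ((t * ω) • esoMat m 1) * bandScaling m ω⁻¹ := by
  have hinv := bandScaling_mul_bandScaling_inv (m := m) hω
  have hdet := isUnit_det_of_right_inverse hinv
  have hconj : t • esoMat m ω = bandScaling m ω * ((t * ω) • esoMat m 1) * (bandScaling m ω)⁻¹ := by
    rw [← mul_nonsing_inv_cancel_right _ (esoMat m ω) hdet, esoMat_mul_bandScaling]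
    simp only [smul_mul_assoc, mul_smul_comm, smul_smul, mul_assoc]
  rw [hconj, exp_conj _ _ ((isUnit_iff_isUnit_det _).mpr hdet), inv_eq_right_inv hinv]

-- Under this instance `‖A‖` is definitionally `‖toEuclideanCLM A‖`, the norm of the theorem.
open scoped Matrix.Norms.L2Operator

theorem norm_bandScaling_le_pow {ω : ℝ} (hω : 1 ≤ ω) : ‖bandScaling m ω‖ ≤ ω ^ (m - 1) := by
  rw [bandScaling, l2_opNorm_diagonal, pi_norm_le_iff_of_nonneg (by positivity)]
  intro i
  rw [Real.norm_of_nonneg (by positivity)]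
  exact pow_le_pow_right₀ hω (by omega)

theorem norm_bandScaling_le_one {ω : ℝ} (hω₀ : 0 ≤ ω) (hω₁ : ω ≤ 1) : ‖bandScaling m ω‖ ≤ 1 := by
  rw [bandScaling, l2_opNorm_diagonal, pi_norm_le_iff_of_nonneg zero_le_one]
  intro i
  rw [Real.norm_of_nonneg (by positivity)]
  exact pow_le_one₀ hω₀ hω₁

noncomputable def peakingConst (m : ℕ) : ℝ :=
  ∑ n ∈ range m, 2 ^ n * ‖(esoMat m 1 + 1) ^ n‖

theorem peakingConst_pos (hm : 1 ≤ m) : 0 < peakingConst m := by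
  have : Nonempty (Fin m) := ⟨⟨0, hm⟩⟩
  refine lt_of_lt_of_le ?_ (single_le_sum (fun n _ => by positivity) (mem_range.mpr hm))
  simp

theorem norm_exp_smul_esoMat_le {ω t : ℝ} (hω : 1 ≤ ω) (ht : 0 ≤ t) :
    ‖exp (t • esoMat m ω)‖ ≤ peakingConst m * ω ^ (m - 1) * Real.exp (-(ω * t) / 2) := by
  have hω₀ : 0 < ω := one_pos.trans_le hω
  rw [exp_smul_esoMat hω₀.ne']
  have hE : ‖exp ((t * ω) • esoMat m 1)‖ ≤ peakingConst m * Real.exp (-(t * ω) / 2) :=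
    norm_exp_smul_le_of_add_one_pow_eq_zero esoMat_one_add_one_pow_self (by positivity)
  calc _ ≤ ‖bandScaling m ω‖ * ‖exp ((t * ω) • esoMat m 1)‖ * ‖bandScaling m ω⁻¹‖ :=
        norm_mul₃_le
    _ ≤ ‖bandScaling m ω‖ * ‖exp ((t * ω) • esoMat m 1)‖ :=
        mul_le_of_le_one_right (by positivity)
          (norm_bandScaling_le_one (inv_nonneg.mpr hω₀.le) (inv_le_one_of_one_le₀ hω))
    _ ≤ ω ^ (m - 1) * (peakingConst m * Real.exp (-(t * ω) / 2)) :=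
        mul_le_mul (norm_bandScaling_le_pow hω) hE (norm_nonneg _) (pow_nonneg hω₀.le _)
    _ = peakingConst m * ω ^ (m - 1) * Real.exp (-(ω * t) / 2) := by ring_nf

end BandwidthScaling

/-- There is a constant `C > 0` depending only on `m` such that for all `ω ≥ 1` and `t ≥ 0`
the (Euclidean) operator norm of the ESO error semigroup satisfies
`‖exp(t·M(ω))‖ ≤ C·ω^{m−1}·e^{−ωt/2}`. -/
theorem eso_exp_norm_bound (m : ℕ) (hm : 1 ≤ m) :
    ∃ C : ℝ, 0 < C ∧ ∀ ω : ℝ, 1 ≤ ω → ∀ t : ℝ, 0 ≤ t →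
      ‖Matrix.toEuclideanCLM (𝕜 := ℝ) (NormedSpace.exp (t • esoMat m ω))‖ ≤
        C * ω ^ (m - 1) * Real.exp (-(ω * t) / 2) :=
  ⟨peakingConst m, peakingConst_pos hm, fun _ hω _ ht => norm_exp_smul_esoMat_le hω ht⟩
end

section
/- (Lemma 1: input-to-state stability of the observation error subsystem.) Let n ≥ 1, let A = A_{n+1} be the (n+1)×(n+1) upper shift matrix, c the first standard basis vector, b the last standard basis vector, and for ω_o > 1 let l ∈ ℝ^{n+1} have entries l_i = binom(n+1, i)·ω_o^i. Then there exist constants c₁, c₂, c₃, c₄ > 0 such that for all r_ḋ, r_w > 0, for every differentiable function z̃ : ℝ → ℝ^{n+1} and all functions ḋ, w : ℝ → ℝ satisfying, for all t ≥ 0, z̃′(t) = (A − l·c^⊤)·z̃(t) + ḋ(t)·b − w(t)·l, |ḋ(t)| ≤ r_ḋ, and |w(t)| ≤ r_w, the following bound holds for all t ≥ 0: ‖z̃(t)‖ ≤ ω_o^n·c₁·‖z̃(0)‖·exp(−c₂·ω_o·t) + (1/ω_o)·c₃·(r_ḋ + ω_o^{n+1}·c₄·r_w), where ‖·‖ is the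 Euclidean norm on ℝ^{n+1}. -/
/-!
The gains `lᵢ = binom(n+1, i) ωⁱ` are the coefficients of `(X + ω)ⁿ⁺¹`, so `A − l cᵀ` is in observer
canonical form: sending the standard basis `e₁, …, eₙ₊₁` to `Xⁿ, …, 1`, it acts as multiplication
by `X` on `ℝ[X] ⧸ ((X + ω)ⁿ⁺¹)`. Hence `A − l cᵀ + ω I` is nilpotent, and
`exp (t (A − l cᵀ)) = e^{-ωt} · (polynomial in t)` is at most `C e^{-ωt/2}`.
The derivative of `s ↦ exp ((t − s)(A − l cᵀ)) z̃(s)` is `exp ((t − s)(A − l cᵀ)) (ḋ b − w l)`,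
of norm at most `C R e^{-ω(t−s)/2}` with `R = r_ḋ + ‖l‖ r_w`; comparing on `[0, t]` with the
primitive of this bound gives `‖z̃(t)‖ ≤ C e^{-ωt/2} ‖z̃(0)‖ + 2 C R / ω`.
-/

open Matrix

/-- The last standard basis vector of `ℝ^m`. -/
noncomputable def lastBasis (m : ℕ) : Fin m → ℝ :=
  fun i => if (i : ℕ) = m - 1 then 1 else 0

section ObserverCanonicalForm

open Polynomial

variable (n : ℕ) (ω : ℝ)

noncomputable def errorMatrix : Matrix (Fin (n + 1)) (Fin (n + 1)) ℝ :=
  shiftMat (n + 1) - vecMulVec (obsGain (n + 1) ω) (firstBasis (n + 1))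

noncomputable def revCoeffPoly : (Fin (n + 1) → ℝ) →ₗ[ℝ] ℝ[X] :=
  Fintype.linearCombination ℝ fun i => X ^ (n - i : ℕ)

variable {n}

theorem revCoeffPoly_apply (z : Fin (n + 1) → ℝ) :
    revCoeffPoly n z = ∑ i, z i • X ^ (n - i : ℕ) :=
  Fintype.linearCombination_apply _ _ _

theorem revCoeffPoly_injective : Function.Injective (revCoeffPoly n) := by
  refine LinearIndependent.fintypeLinearCombination_injective ?_
  have := (basisMonomials ℝ).linearIndependent.comp (fun i : Fin (n + 1) => n - i)
    fun i j h => Fin.ext (by simp only at h; omega)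
  simpa [Function.comp_def, coe_basisMonomials, monomial_one_right_eq_X_pow] using this

theorem degree_revCoeffPoly_lt (z : Fin (n + 1) → ℝ) : (revCoeffPoly n z).degree < n + 1 := by
  rw [← Nat.cast_succ, ← mem_degreeLT, revCoeffPoly_apply]
  refine Submodule.sum_mem _ fun i _ => Submodule.smul_mem _ _ ?_
  rw [mem_degreeLT, degree_X_pow]
  exact_mod_cast Nat.lt_succ_of_le (Nat.sub_le n i)

theorem shiftMat_mulVec_castSucc (z : Fin (n + 1) → ℝ) (i : Fin n) :
    (shiftMat (n + 1) *ᵥ z) i.castSucc = z i.succ := by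
  simp only [mulVec, dotProduct, shiftMat, of_apply, Fin.val_castSucc, ite_mul, one_mul, zero_mul]
  rw [Finset.sum_eq_single i.succ (fun j _ hj => if_neg fun h => hj (Fin.ext h.symm)) (by simp)]
  exact if_pos rfl

theorem shiftMat_mulVec_last (z : Fin (n + 1) → ℝ) : (shiftMat (n + 1) *ᵥ z) (Fin.last n) = 0 := by
  simp only [mulVec, dotProduct, shiftMat, of_apply, Fin.val_last, ite_mul, one_mul, zero_mul]
  exact Finset.sum_eq_zero fun j _ => if_neg (by omega)

theorem revCoeffPoly_shiftMat_mulVec (z : Fin (n + 1) → ℝ) :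
    revCoeffPoly n (shiftMat (n + 1) *ᵥ z) = X * revCoeffPoly n z - C (z 0) * X ^ (n + 1) := by
  rw [revCoeffPoly_apply, revCoeffPoly_apply, Fin.sum_univ_castSucc, Fin.sum_univ_succ, mul_add,
    Finset.mul_sum, shiftMat_mulVec_last, zero_smul, add_zero]
  simp only [shiftMat_mulVec_castSucc, Fin.val_castSucc, Fin.val_succ, Fin.val_zero, Nat.sub_zero,
    smul_eq_C_mul]
  rw [add_sub_right_comm, ← mul_assoc, mul_comm X, mul_assoc, ← pow_succ', sub_self, zero_add]
  refine Finset.sum_congr rfl fun i _ => ?_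
  rw [show n - i = n - (i + 1) + 1 by omega, pow_succ]
  ring

theorem revCoeffPoly_obsGain :
    revCoeffPoly n (obsGain (n + 1) ω) = (X + C ω) ^ (n + 1) - X ^ (n + 1) := by
  rw [revCoeffPoly_apply, add_comm X, add_pow, Finset.sum_range_succ', eq_sub_iff_add_eq]
  simp only [pow_zero, Nat.sub_zero, Nat.choose_zero_right, Nat.cast_one, one_mul, mul_one]
  congr 1
  refine (Fin.sum_univ_eq_sum_range
    (fun k => ((n + 1).choose (k + 1) * ω ^ (k + 1) : ℝ) • (X : ℝ[X]) ^ (n - k)) _).trans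
    (Finset.sum_congr rfl fun k _ => ?_)
  rw [Nat.add_sub_add_right, smul_eq_C_mul, C_mul, C_pow, map_natCast]
  ring

theorem firstBasis_dotProduct (z : Fin (n + 1) → ℝ) : firstBasis (n + 1) ⬝ᵥ z = z 0 := by
  simp [dotProduct, firstBasis]

theorem revCoeffPoly_errorMatrix_mulVec (z : Fin (n + 1) → ℝ) :
    revCoeffPoly n (errorMatrix n ω *ᵥ z) =
      X * revCoeffPoly n z - C (z 0) * (X + C ω) ^ (n + 1) := by
  rw [errorMatrix, sub_mulVec, vecMulVec_mulVec, firstBasis_dotProduct, op_smul_eq_smul, map_sub,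
    map_smul, revCoeffPoly_shiftMat_mulVec, revCoeffPoly_obsGain, smul_eq_C_mul]
  ring

theorem errorMatrix_add_algebraMap_pow_eq_zero :
    (errorMatrix n ω + algebraMap ℝ _ ω) ^ (n + 1) = 0 := by
  set N := errorMatrix n ω + algebraMap ℝ _ ω
  set p := (X + C ω) ^ (n + 1)
  have hN : ∀ z, revCoeffPoly n (N *ᵥ z) = (X + C ω) * revCoeffPoly n z - C (z 0) * p := by
    intro z
    rw [add_mulVec, Algebra.algebraMap_eq_smul_one, smul_mulVec, one_mulVec, map_add, map_smul,
      revCoeffPoly_errorMatrix_mulVec, smul_eq_C_mul]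
    ring
  have hpow : ∀ k z, AdjoinRoot.mk p (revCoeffPoly n (N ^ k *ᵥ z))
      = AdjoinRoot.mk p (X + C ω) ^ k * AdjoinRoot.mk p (revCoeffPoly n z) := by
    intro k
    induction k with
    | zero => simp
    | succ k ih =>
      intro z
      rw [pow_succ', ← mulVec_mulVec, hN, map_sub, map_mul, map_mul, AdjoinRoot.mk_self, mul_zero,
        sub_zero, ih, pow_succ', mul_assoc]
  have hzero : ∀ z, N ^ (n + 1) *ᵥ z = 0 := by
    intro z
    apply revCoeffPoly_injective
    rw [map_zero]
    refine eq_zero_of_dvd_of_degree_lt (p := p) ?_ ?_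
    · rw [← AdjoinRoot.mk_eq_zero, hpow, ← map_pow, AdjoinRoot.mk_self, zero_mul]
    · rw [degree_pow, degree_X_add_C, nsmul_one]
      exact_mod_cast degree_revCoeffPoly_lt _
  exact ext_of_mulVec_single fun i => by rw [hzero, zero_mulVec]

end ObserverCanonicalForm

section ExponentialBound

open NormedSpace Finset

theorem NormedSpace.exp_eq_sum_range_of_pow_eq_zero (𝕂 : Type*) {𝔸 : Type*} [Field 𝕂] [CharZero 𝕂]
    [Ring 𝔸] [Algebra 𝕂 𝔸] [TopologicalSpace 𝔸] [IsTopologicalRing 𝔸] {x : 𝔸} {m : ℕ}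
    (hx : x ^ m = 0) : exp x = ∑ k ∈ range m, (k.factorial⁻¹ : 𝕂) • x ^ k := by
  rw [exp_eq_tsum 𝕂]
  refine tsum_eq_sum fun k hk => ?_
  rw [pow_eq_zero_of_le (by simpa using hk) hx, smul_zero]

variable {𝔸 : Type*} [NormedRing 𝔸] [NormedAlgebra ℝ 𝔸]

theorem norm_exp_smul_le_of_pow_eq_zero_s12 {x : 𝔸} {m : ℕ} (hx : x ^ m = 0) {δ t : ℝ} (hδ : 0 < δ)
    (ht : 0 ≤ t) :
    ‖exp (t • x)‖ ≤ (∑ k ∈ range m, ‖x ^ k‖ / δ ^ k) * Real.exp (δ * t) := by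
  have htx : (t • x) ^ m = 0 := by rw [smul_pow, hx, smul_zero]
  rw [exp_eq_sum_range_of_pow_eq_zero ℝ htx, sum_mul]
  refine (norm_sum_le _ _).trans (sum_le_sum fun k _ => ?_)
  have hk : t ^ k / k.factorial = (δ * t) ^ k / k.factorial / δ ^ k := by
    field_simp; ring
  calc ‖(k.factorial⁻¹ : ℝ) • (t • x) ^ k‖ = t ^ k / k.factorial * ‖x ^ k‖ := by
        rw [smul_pow, smul_smul, norm_smul, Real.norm_of_nonneg (by positivity), div_eq_inv_mul]
    _ ≤ Real.exp (δ * t) / δ ^ k * ‖x ^ k‖ := by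
        rw [hk]
        gcongr
        exact Real.pow_div_factorial_le_exp _ (by positivity) k
    _ = ‖x ^ k‖ / δ ^ k * Real.exp (δ * t) := by ring

theorem exp_add_algebraMap [CompleteSpace 𝔸] (x : 𝔸) (c : ℝ) :
    exp (x + algebraMap ℝ 𝔸 c) = Real.exp c • exp x := by
  -- `exp` does not depend on the `ℚ`-algebra structure, but `exp_add_of_commute` asks for one.
  let _ : NormedAlgebra ℚ 𝔸 := NormedAlgebra.restrictScalars ℚ ℝ 𝔸
  rw [exp_add_of_commute (Algebra.commutes c x).symm, ← algebraMap_exp_comm, ← Real.exp_eq_exp_ℝ,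
    ← Algebra.commutes, Algebra.smul_def]

theorem exists_norm_exp_smul_le_of_isNilpotent [CompleteSpace 𝔸] {a : 𝔸} {ω : ℝ}
    (ha : IsNilpotent (a + algebraMap ℝ 𝔸 ω)) {μ : ℝ} (hμ : μ < ω) :
    ∃ C > 0, ∀ t ≥ 0, ‖exp (t • a)‖ ≤ C * Real.exp (-(μ * t)) := by
  obtain ⟨m, hm⟩ := ha
  set N := a + algebraMap ℝ 𝔸 ω
  set C₀ := ∑ k ∈ range m, ‖N ^ k‖ / (ω - μ) ^ k
  have hC₀ : 0 ≤ C₀ := sum_nonneg fun k _ => div_nonneg (norm_nonneg _) (pow_nonneg (by linarith) _)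
  refine ⟨C₀ + 1, by linarith, fun t ht => ?_⟩
  have hsplit : t • a = t • N + algebraMap ℝ 𝔸 (-(ω * t)) := by
    simp only [N, Algebra.algebraMap_eq_smul_one]
    module
  calc ‖exp (t • a)‖ = Real.exp (-(ω * t)) * ‖exp (t • N)‖ := by
        rw [hsplit, exp_add_algebraMap, norm_smul, Real.norm_of_nonneg (Real.exp_pos _).le]
    _ ≤ Real.exp (-(ω * t)) * (C₀ * Real.exp ((ω - μ) * t)) := by
        gcongr
        exact norm_exp_smul_le_of_pow_eq_zero_s12 hm (by linarith) ht
    _ = C₀ * Real.exp (-(μ * t)) := by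
        rw [mul_left_comm, ← Real.exp_add]; ring_nf
    _ ≤ (C₀ + 1) * Real.exp (-(μ * t)) := by gcongr; linarith

end ExponentialBound

section VariationOfConstants

open NormedSpace Set

variable {E : Type*} [NormedAddCommGroup E] [NormedSpace ℝ E] [CompleteSpace E]

theorem hasDerivAt_exp_sub_smul_apply {T : E →L[ℝ] E} {z u : ℝ → E} {s : ℝ} (t : ℝ)
    (hz : HasDerivAt z (T (z s) + u s) s) :
    HasDerivAt (fun r => exp ((t - r) • T) (z r)) (exp ((t - s) • T) (u s)) s := by
  have hexp :
      HasDerivAt (fun r : ℝ => exp ((t - r) • T)) ((-1 : ℝ) • (exp ((t - s) • T) * T)) s :=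
    (hasDerivAt_exp_smul_const T (t - s)).scomp s ((hasDerivAt_id s).const_sub t)
  convert hexp.clm_apply hz using 1
  rw [neg_one_smul, _root_.neg_apply, mul_apply_eq_comp, map_add]
  abel

theorem norm_le_of_hasDerivAt_of_norm_exp_smul_le {T : E →L[ℝ] E} {C μ R : ℝ} (hμ : 0 < μ)
    (hT : ∀ t ≥ 0, ‖exp (t • T)‖ ≤ C * Real.exp (-(μ * t))) {z u : ℝ → E}
    (hz : ∀ t ≥ 0, HasDerivAt z (T (z t) + u t) t) (hu : ∀ t ≥ 0, ‖u t‖ ≤ R) {t : ℝ}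
    (ht : 0 ≤ t) :
    ‖z t‖ ≤ C * Real.exp (-(μ * t)) * ‖z 0‖ + C * R / μ := by
  have hC : 0 ≤ C := by simpa using (norm_nonneg _).trans (hT 0 le_rfl)
  have hR : 0 ≤ R := (norm_nonneg _).trans (hu 0 le_rfl)
  set φ : ℝ → E := fun s => exp ((t - s) • T) (z s)
  set B : ℝ → ℝ := fun s =>
    C * Real.exp (-(μ * t)) * ‖z 0‖ + C * R / μ * Real.exp (-(μ * (t - s)))
  have hφ : ∀ s ∈ Icc 0 t, HasDerivAt φ (exp ((t - s) • T) (u s)) s :=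
    fun s hs => hasDerivAt_exp_sub_smul_apply t (hz s hs.1)
  have hB : ∀ s, HasDerivAt B (C * R * Real.exp (-(μ * (t - s)))) s := by
    intro s
    have hlin : HasDerivAt (fun r => -(μ * (t - r))) μ s :=
      (((hasDerivAt_id s).const_sub t).const_mul μ).neg.congr_deriv (by ring)
    exact ((hlin.exp.const_mul _).const_add _).congr_deriv (by field_simp)
  have hφ0 : ‖φ 0‖ ≤ B 0 := by
    calc ‖φ 0‖ ≤ ‖exp (t • T)‖ * ‖z 0‖ := by
          simpa [φ] using (exp (t • T) : E →L[ℝ] E).le_opNorm (z 0)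
      _ ≤ C * Real.exp (-(μ * t)) * ‖z 0‖ := by gcongr; exact hT t ht
      _ ≤ B 0 := by simp only [B, sub_zero]; have := Real.exp_pos (-(μ * t)); bound
  have hbound :
      ∀ s ∈ Ico 0 t, ‖exp ((t - s) • T) (u s)‖ ≤ C * R * Real.exp (-(μ * (t - s))) := by
    intro s hs
    calc ‖exp ((t - s) • T) (u s)‖ ≤ ‖exp ((t - s) • T)‖ * ‖u s‖ :=
          ContinuousLinearMap.le_opNorm _ _
      _ ≤ C * Real.exp (-(μ * (t - s))) * R :=
          mul_le_mul (hT _ (by linarith [hs.2])) (hu s hs.1) (norm_nonneg _) (by positivity)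
      _ = C * R * Real.exp (-(μ * (t - s))) := by ring
  have := image_norm_le_of_norm_deriv_right_le_deriv_boundary
    (fun s hs => (hφ s hs).continuousAt.continuousWithinAt)
    (fun s hs => (hφ s (Ico_subset_Icc_self hs)).hasDerivWithinAt) hφ0 hB hbound
    (right_mem_Icc.2 ht)
  simpa [φ, B] using this

end VariationOfConstants

theorem obsGain_ne_zero (n : ℕ) {ω : ℝ} (hω : ω ≠ 0) : obsGain (n + 1) ω ≠ 0 := fun h => by
  simpa [obsGain, hω, Nat.cast_add_one_ne_zero] using congrFun h 0

theorem norm_lastBasis (n : ℕ) :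
    ‖(EuclideanSpace.equiv (Fin (n + 1)) ℝ).symm (lastBasis (n + 1))‖ = 1 := by
  have : lastBasis (n + 1) = Pi.single (Fin.last n) 1 := by
    ext i
    simp [lastBasis, Pi.single_apply, Fin.ext_iff]
  simp [this]

theorem observer_ISS_general (n : ℕ) (ωo : ℝ) (hωo : 1 < ωo) :
    ∃ c₁ c₂ c₃ c₄ : ℝ, 0 < c₁ ∧ 0 < c₂ ∧ 0 < c₃ ∧ 0 < c₄ ∧
      ∀ (rd rw : ℝ), 0 < rd → 0 < rw →
      ∀ (ztil : ℝ → EuclideanSpace ℝ (Fin (n + 1))) (ddot w : ℝ → ℝ),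
        (∀ t : ℝ, 0 ≤ t → HasDerivAt ztil
          ((Matrix.toEuclideanLin
              (shiftMat (n + 1) - Matrix.vecMulVec (obsGain (n + 1) ωo) (firstBasis (n + 1))))
              (ztil t)
            + ddot t • (EuclideanSpace.equiv (Fin (n + 1)) ℝ).symm (lastBasis (n + 1))
            - w t • (EuclideanSpace.equiv (Fin (n + 1)) ℝ).symm (obsGain (n + 1) ωo)) t) →
        (∀ t : ℝ, 0 ≤ t → |ddot t| ≤ rd) →
        (∀ t : ℝ, 0 ≤ t → |w t| ≤ rw) →
        ∀ t : ℝ, 0 ≤ t →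
          ‖ztil t‖ ≤ ωo ^ n * c₁ * ‖ztil 0‖ * Real.exp (-(c₂ * ωo * t))
            + (1 / ωo) * c₃ * (rd + ωo ^ (n + 1) * c₄ * rw) := by
  have hω : 0 < ωo := by linarith
  set T := Matrix.toEuclideanCLM (𝕜 := ℝ) (errorMatrix n ωo)
  have hnil : IsNilpotent (T + algebraMap ℝ _ ωo) := by
    simpa only [T, map_add, AlgHomClass.commutes] using
      IsNilpotent.map ⟨n + 1, errorMatrix_add_algebraMap_pow_eq_zero ωo⟩
        (Matrix.toEuclideanCLM (𝕜 := ℝ) (n := Fin (n + 1)))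
  obtain ⟨C, hC, hT⟩ := exists_norm_exp_smul_le_of_isNilpotent hnil (half_lt_self hω)
  set l := (EuclideanSpace.equiv (Fin (n + 1)) ℝ).symm (obsGain (n + 1) ωo)
  set b := (EuclideanSpace.equiv (Fin (n + 1)) ℝ).symm (lastBasis (n + 1))
  have hl : 0 < ‖l‖ := norm_pos_iff.2 <| by simpa [l] using obsGain_ne_zero n hω.ne'
  refine ⟨C / ωo ^ n, 1 / 2, 2 * C, ‖l‖ / ωo ^ (n + 1), by positivity, by norm_num, by positivity,
    by positivity, fun rd rw _ _ z ddot w hz hd hw t ht => ?_⟩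
  have hu : ∀ s ≥ 0, ‖ddot s • b - w s • l‖ ≤ rd + ‖l‖ * rw := by
    intro s hs
    calc ‖ddot s • b - w s • l‖ ≤ |ddot s| * ‖b‖ + |w s| * ‖l‖ := by
          simpa [norm_smul] using norm_sub_le (ddot s • b) (w s • l)
      _ ≤ rd + ‖l‖ * rw := by
          rw [norm_lastBasis, mul_one, mul_comm ‖l‖]
          gcongr
          exacts [hd s hs, hw s hs]
  have hz' : ∀ s ≥ 0, HasDerivAt z (T (z s) + (ddot s • b - w s • l)) s := fun s hs => by
    rw [← add_sub_assoc]
    exact hz s hs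
  calc ‖z t‖ ≤ C * Real.exp (-(ωo / 2 * t)) * ‖z 0‖ + C * (rd + ‖l‖ * rw) / (ωo / 2) :=
        norm_le_of_hasDerivAt_of_norm_exp_smul_le (half_pos hω) hT hz' hu ht
    _ = _ := by field_simp

/-- Lemma 1 of the paper: input-to-state stability of the observation error subsystem
`z̃′ = (A_{n+1} − l·c^⊤)·z̃ + ḋ·b_{n+1} − w·l` with bandwidth-parametrized gain `l`:
`‖z̃(t)‖ ≤ ω_o^n·c₁·‖z̃(0)‖·exp(−c₂ω_o t) + (1/ω_o)·c₃·(r_ḋ + ω_o^{n+1}·c₄·r_w)`. -/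
theorem observer_ISS (n : ℕ) (hn : 1 ≤ n) (ωo : ℝ) (hωo : 1 < ωo) :
    ∃ c₁ c₂ c₃ c₄ : ℝ, 0 < c₁ ∧ 0 < c₂ ∧ 0 < c₃ ∧ 0 < c₄ ∧
      ∀ (rd rw : ℝ), 0 < rd → 0 < rw →
      ∀ (ztil : ℝ → EuclideanSpace ℝ (Fin (n + 1))) (ddot w : ℝ → ℝ),
        (∀ t : ℝ, 0 ≤ t → HasDerivAt ztil
          ((Matrix.toEuclideanLin
              (shiftMat (n + 1) - Matrix.vecMulVec (obsGain (n + 1) ωo) (firstBasis (n + 1))))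
              (ztil t)
            + ddot t • (EuclideanSpace.equiv (Fin (n + 1)) ℝ).symm (lastBasis (n + 1))
            - w t • (EuclideanSpace.equiv (Fin (n + 1)) ℝ).symm (obsGain (n + 1) ωo)) t) →
        (∀ t : ℝ, 0 ≤ t → |ddot t| ≤ rd) →
        (∀ t : ℝ, 0 ≤ t → |w t| ≤ rw) →
        ∀ t : ℝ, 0 ≤ t →
          ‖ztil t‖ ≤ ωo ^ n * c₁ * ‖ztil 0‖ * Real.exp (-(c₂ * ωo * t))
            + (1 / ωo) * c₃ * (rd + ωo ^ (n + 1) * c₄ * rw) :=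
  observer_ISS_general n ωo hωo
end
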